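/- Define N(ρ) = −min_{W ∈ 𝒲} tr(ρW). Let Λ be a trace-preserving completely positive map on matrices over ℂ^{d_1}⊗⋯⊗ℂ^{d_n} admitting a fully separable operator-sum representation, i.e., Λ(ρ) = Σ_i K_i ρ K_i† with Σ_i K_i† K_i = 𝟙 and each Kraus operator of tensor-product form K_i = A_i ⊗ B_i ⊗ ⋯ ⊗ F_i. Then N(Λ(ρ)) ≤ N(ρ) for every state ρ. -/

import Mathlib

open Matrix Finset ComplexOrder

abbrev MatD {n : ℕ} (d : Fin n → ℕ) :=
  Matrix ((a : Fin n) → Fin (d a)) ((a : Fin n) → Fin (d a)) ℂ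

/-- The partial transpose with respect to the subset `M` of tensor factors. -/
def ptrans {n : ℕ} (d : Fin n → ℕ) (M : Finset (Fin n)) (X : MatD d) : MatD d :=
  fun i j => X (fun a => if a ∈ M then j a else i a) (fun a => if a ∈ M then i a else j a)

def IsState {n : ℕ} {d : Fin n → ℕ} (ρ : MatD d) : Prop :=
  ρ.PosSemidef ∧ ρ.trace = 1

/-- The tensor product `A 0 ⊗ A 1 ⊗ ⋯ ⊗ A (n-1)` of local operators, as an operator on
the whole tensor product space (entrywise product formula). -/
def tensorOpD {n : ℕ} (d : Fin n → ℕ)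
    (A : (a : Fin n) → Matrix (Fin (d a)) (Fin (d a)) ℂ) : MatD d :=
  fun i j => ∏ a, A a (i a) (j a)

/-- The feasible set 𝒲. -/
def FeasibleW {n : ℕ} (d : Fin n → ℕ) (W : MatD d) : Prop :=
  W.IsHermitian ∧
  ∀ M : Finset (Fin n), M.Nonempty → M ≠ Finset.univ →
    ∃ P Q : MatD d, P.PosSemidef ∧ (1 - P).PosSemidef ∧
      Q.PosSemidef ∧ (1 - Q).PosSemidef ∧ W = P + ptrans d M Q

/-- `N(ρ) = − min_{W ∈ 𝒲} tr(ρ W)`. -/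
noncomputable def Nval {n : ℕ} (d : Fin n → ℕ) (ρ : MatD d) : ℝ :=
  - sInf {r : ℝ | ∃ W : MatD d, FeasibleW d W ∧ r = ((ρ * W).trace).re}

/-!
`N(ρ)` is minus the minimum of `W ↦ tr(ρ W)` over `𝒲`, and `tr(Λ(ρ) W) = tr(ρ Λ*(W))` for the
dual map `Λ*(W) = Σ_i K_iᴴ W K_i`, so it suffices that `Λ*` maps `𝒲` into itself. As `Λ*` is
unital and completely positive it preserves `0 ≤ P ≤ 1`; and for product Kraus operators
`Kᴴ Q^{T_M} K = (Lᴴ Q L)^{T_M}`, where `L` is `K` with its factors in `M` complex conjugated, so the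
partially conjugated channel, again trace preserving, takes care of the `Q`-part.
If there is no nonempty strict subset `M` (that is, `n ≤ 1`), `𝒲` is the set of all Hermitian
matrices, and both sides are `0`, the junk value of `sInf` on an unbounded set.
-/

namespace Matrix

variable {ι N : Type*}

lemma PosSemidef.norm_apply_le_one [DecidableEq N] {Q : Matrix N N ℂ} (hQ : Q.PosSemidef)
    (hQ₁ : (1 - Q).PosSemidef) (i j : N) : ‖Q i j‖ ≤ 1 := by
  have hdiag (k : N) : 0 ≤ Q k k ∧ Q k k ≤ 1 :=
    ⟨hQ.diag_nonneg, by simpa [sub_nonneg] using hQ₁.diag_nonneg (i := k)⟩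
  -- `‖Q i j‖ ^ 2 ≤ Q i i * Q j j`, from the principal `2 × 2` minor on `i, j`
  have hdet := (hQ.submatrix ![i, j]).det_nonneg
  rw [det_fin_two, submatrix_apply, submatrix_apply, submatrix_apply, submatrix_apply] at hdet
  simp only [Matrix.cons_val_zero, Matrix.cons_val_one] at hdet
  have hji : Q j i = star (Q i j) := by simpa using (hQ.isHermitian.apply j i).symm
  have hsq : ((‖Q i j‖ ^ 2 : ℝ) : ℂ) ≤ 1 := calc
    ((‖Q i j‖ ^ 2 : ℝ) : ℂ) = Q i j * Q j i := by
      rw [hji, Complex.star_def, Complex.mul_conj, Complex.normSq_eq_norm_sq]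
    _ ≤ Q i i * Q j j := sub_nonneg.mp hdet
    _ ≤ 1 := mul_le_one₀ (hdiag i).2 (hdiag j).1 (hdiag j).2
  exact (sq_le_one_iff₀ (norm_nonneg _)).mp (by exact_mod_cast hsq)

lemma neg_sum_norm_le_re_trace_mul [Fintype N] (X Y : Matrix N N ℂ) (hY : ∀ i j, ‖Y i j‖ ≤ 1) :
    -∑ i, ∑ j, ‖X i j‖ ≤ (X * Y).trace.re := by
  have : ‖(X * Y).trace‖ ≤ ∑ i, ∑ j, ‖X i j‖ := calc
    ‖(X * Y).trace‖ ≤ ∑ i, ∑ j, ‖X i j * Y j i‖ :=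
      (norm_sum_le _ _).trans (sum_le_sum fun i _ => norm_sum_le _ _)
    _ ≤ ∑ i, ∑ j, ‖X i j‖ := by
      gcongr with i _ j _
      rw [norm_mul]
      exact mul_le_of_le_one_right (norm_nonneg _) (hY j i)
  linarith [neg_abs_le (X * Y).trace.re, Complex.abs_re_le_norm (X * Y).trace]

lemma posSemidef_one_sub_sum_conjTranspose_mul_mul [Fintype N] [DecidableEq N]
    {K : ι → Matrix N N ℂ} {s : Finset ι} (hK : ∑ i ∈ s, (K i)ᴴ * K i = 1) {P : Matrix N N ℂ}
    (hP₁ : (1 - P).PosSemidef) :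
    (1 - ∑ i ∈ s, (K i)ᴴ * P * K i).PosSemidef := by
  have : 1 - ∑ i ∈ s, (K i)ᴴ * P * K i = ∑ i ∈ s, (K i)ᴴ * (1 - P) * K i := by
    simp only [Matrix.mul_sub, Matrix.sub_mul, Matrix.mul_one, sum_sub_distrib, hK]
  rw [this]
  exact posSemidef_sum s fun i _ => hP₁.conjTranspose_mul_mul_same (K i)

lemma trace_sum_mul_mul_conjTranspose_mul [Fintype N] (K : ι → Matrix N N ℂ) (s : Finset ι)
    (ρ W : Matrix N N ℂ) :
    ((∑ i ∈ s, K i * ρ * (K i)ᴴ) * W).trace = (ρ * ∑ i ∈ s, (K i)ᴴ * W * K i).trace := by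
  simp only [Finset.sum_mul, Finset.mul_sum, trace_sum]
  refine sum_congr rfl fun i _ => ?_
  rw [Matrix.mul_assoc, trace_mul_comm, ← Matrix.mul_assoc, ← Matrix.mul_assoc, trace_mul_comm]
  simp only [Matrix.mul_assoc]

lemma trace_sum_mul_mul_conjTranspose [Fintype N] [DecidableEq N] {K : ι → Matrix N N ℂ}
    {s : Finset ι} (hK : ∑ i ∈ s, (K i)ᴴ * K i = 1) (ρ : Matrix N N ℂ) :
    (∑ i ∈ s, K i * ρ * (K i)ᴴ).trace = ρ.trace := by
  simpa [hK] using trace_sum_mul_mul_conjTranspose_mul K s ρ 1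

lemma conjTranspose_mul_mul_apply [Fintype N] (B X C : Matrix N N ℂ) (i j : N) :
    (Bᴴ * X * C) i j = ∑ pq : N × N, star (B pq.1 i) * X pq.1 pq.2 * C pq.2 j := by
  simp only [mul_apply, conjTranspose_apply, Finset.sum_mul, ← Fintype.sum_prod_type']
  exact Fintype.sum_equiv (Equiv.prodComm _ _) _ _ fun _ => rfl

end Matrix

namespace Finset

variable {ι : Type*} {π : ι → Sort*} (s : Finset ι) [∀ j, Decidable (j ∈ s)]

lemma piecewise_piecewise_piecewise (f g : ∀ i, π i) :
    s.piecewise (s.piecewise f g) (s.piecewise g f) = f := by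
  ext i
  by_cases hi : i ∈ s <;> simp [hi]

lemma piecewise_eq_piecewise_swap_iff {f g : ∀ i, π i} :
    s.piecewise f g = s.piecewise g f ↔ f = g := by
  refine ⟨fun h => ?_, fun h => h ▸ rfl⟩
  calc f = s.piecewise (s.piecewise f g) (s.piecewise g f) :=
        (piecewise_piecewise_piecewise s f g).symm
    _ = s.piecewise (s.piecewise g f) (s.piecewise f g) := by rw [h]
    _ = g := piecewise_piecewise_piecewise s g f

end Finset

section PartialTranspose

variable {n : ℕ} {d : Fin n → ℕ}

lemma ptrans_apply (M : Finset (Fin n)) (X : MatD d) (i j : (a : Fin n) → Fin (d a)) :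
    ptrans d M X i j = X (M.piecewise j i) (M.piecewise i j) :=
  rfl

lemma ptrans_ptrans (M : Finset (Fin n)) (X : MatD d) : ptrans d M (ptrans d M X) = X := by
  ext i j
  simp only [ptrans_apply, piecewise_piecewise_piecewise]

lemma ptrans_one (M : Finset (Fin n)) : ptrans d M (1 : MatD d) = 1 := by
  ext i j
  simp only [ptrans_apply, one_apply, piecewise_eq_piecewise_swap_iff, eq_comm]

lemma ptrans_sum {ι : Type*} (M : Finset (Fin n)) (s : Finset ι) (X : ι → MatD d) :
    ptrans d M (∑ i ∈ s, X i) = ∑ i ∈ s, ptrans d M (X i) := by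
  ext i j
  simp only [ptrans_apply, Matrix.sum_apply]

def partialConj (M : Finset (Fin n)) (A : (a : Fin n) → Matrix (Fin (d a)) (Fin (d a)) ℂ) :
    (a : Fin n) → Matrix (Fin (d a)) (Fin (d a)) ℂ :=
  fun a => if a ∈ M then (A a).map star else A a

def piecewiseSwap (M : Finset (Fin n)) :
    ((a : Fin n) → Fin (d a)) × ((a : Fin n) → Fin (d a)) ≃
      ((a : Fin n) → Fin (d a)) × ((a : Fin n) → Fin (d a)) :=
  Function.Involutive.toPerm (fun pq => (M.piecewise pq.2 pq.1, M.piecewise pq.1 pq.2))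
    fun pq => by simp only [Finset.piecewise_piecewise_piecewise]

lemma piecewiseSwap_apply (M : Finset (Fin n)) (p q : (a : Fin n) → Fin (d a)) :
    piecewiseSwap M (p, q) = (M.piecewise q p, M.piecewise p q) :=
  rfl

lemma conjTranspose_tensorOpD_mul_ptrans_mul (M : Finset (Fin n))
    (A : (a : Fin n) → Matrix (Fin (d a)) (Fin (d a)) ℂ) (Q : MatD d) :
    (tensorOpD d A)ᴴ * ptrans d M Q * tensorOpD d A =
      ptrans d M ((tensorOpD d (partialConj M A))ᴴ * Q * tensorOpD d (partialConj M A)) := by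
  ext i j
  rw [ptrans_apply, conjTranspose_mul_mul_apply, conjTranspose_mul_mul_apply]
  refine Fintype.sum_equiv (piecewiseSwap M) _ _ fun ⟨p, q⟩ => ?_
  have hfactor : star (tensorOpD d A p i) * tensorOpD d A q j =
      star (tensorOpD d (partialConj M A) (M.piecewise q p) (M.piecewise j i)) *
        tensorOpD d (partialConj M A) (M.piecewise p q) (M.piecewise i j) := by
    simp only [tensorOpD, star_prod, ← Finset.prod_mul_distrib]
    refine Finset.prod_congr rfl fun a _ => ?_
    by_cases ha : a ∈ M
    · simp [partialConj, ha, mul_comm]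
    · simp [partialConj, ha]
  rw [piecewiseSwap_apply, ptrans_apply]
  linear_combination Q (M.piecewise q p) (M.piecewise p q) * hfactor

end PartialTranspose

section Feasible

variable {n : ℕ} {d : Fin n → ℕ}

lemma FeasibleW.one : FeasibleW d 1 :=
  ⟨isHermitian_one, fun M _ _ => ⟨0, 1, .zero, by simpa using .one, .one, by simpa using .zero,
    by rw [ptrans_one, zero_add]⟩⟩

lemma FeasibleW.sum_conjTranspose_tensorOpD_mul_mul {m : ℕ}
    {A : Fin m → (a : Fin n) → Matrix (Fin (d a)) (Fin (d a)) ℂ}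
    (hTP : ∑ i, (tensorOpD d (A i))ᴴ * tensorOpD d (A i) = 1) {W : MatD d} (hW : FeasibleW d W) :
    FeasibleW d (∑ i, (tensorOpD d (A i))ᴴ * W * tensorOpD d (A i)) := by
  refine ⟨isSelfAdjoint_sum _ fun i _ => isHermitian_conjTranspose_mul_mul _ hW.1,
    fun M hM hMU => ?_⟩
  obtain ⟨P, Q, hP, hP₁, hQ, hQ₁, rfl⟩ := hW.2 M hM hMU
  let K i := tensorOpD d (A i)
  let L i := tensorOpD d (partialConj M (A i))
  have hL : ∑ i, (L i)ᴴ * L i = 1 := by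
    have hK (i : Fin m) : (K i)ᴴ * K i = ptrans d M ((L i)ᴴ * L i) := by
      simpa [ptrans_one] using conjTranspose_tensorOpD_mul_ptrans_mul M (A i) 1
    calc ∑ i, (L i)ᴴ * L i = ptrans d M (∑ i, (K i)ᴴ * K i) := by
          simp only [hK, ptrans_sum, ptrans_ptrans]
      _ = 1 := by rw [hTP, ptrans_one]
  refine ⟨∑ i, (K i)ᴴ * P * K i, ∑ i, (L i)ᴴ * Q * L i,
    posSemidef_sum _ fun i _ => hP.conjTranspose_mul_mul_same (K i),
    posSemidef_one_sub_sum_conjTranspose_mul_mul hTP hP₁,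
    posSemidef_sum _ fun i _ => hQ.conjTranspose_mul_mul_same (L i),
    posSemidef_one_sub_sum_conjTranspose_mul_mul hL hQ₁, ?_⟩
  simp only [Matrix.mul_add, Matrix.add_mul, sum_add_distrib, ptrans_sum,
    conjTranspose_tensorOpD_mul_ptrans_mul, K, L]

def feasibleValues (d : Fin n → ℕ) (ρ : MatD d) : Set ℝ :=
  {r : ℝ | ∃ W : MatD d, FeasibleW d W ∧ r = ((ρ * W).trace).re}

lemma Nval_eq_neg_sInf_feasibleValues (ρ : MatD d) : Nval d ρ = -sInf (feasibleValues d ρ) :=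
  rfl

lemma feasibleValues_nonempty (ρ : MatD d) : (feasibleValues d ρ).Nonempty :=
  ⟨_, 1, .one, rfl⟩

lemma bddBelow_feasibleValues {M : Finset (Fin n)} (hM : M.Nonempty) (hMU : M ≠ univ)
    (ρ : MatD d) : BddBelow (feasibleValues d ρ) := by
  refine ⟨-(2 * ∑ i, ∑ j, ‖ρ i j‖), ?_⟩
  rintro _ ⟨W, hW, rfl⟩
  obtain ⟨P, Q, hP, hP₁, hQ, hQ₁, rfl⟩ := hW.2 M hM hMU
  have hPρ := neg_sum_norm_le_re_trace_mul ρ P (hP.norm_apply_le_one hP₁)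
  have hQρ := neg_sum_norm_le_re_trace_mul ρ (ptrans d M Q) fun i j =>
    hQ.norm_apply_le_one hQ₁ _ _
  rw [Matrix.mul_add, trace_add, Complex.add_re]
  linarith

lemma feasibleValues_eq_univ (hM : ∀ M : Finset (Fin n), M.Nonempty → M = univ) {ρ : MatD d}
    (hρ : ρ.trace = 1) : feasibleValues d ρ = Set.univ := by
  refine Set.eq_univ_of_forall fun t =>
    ⟨(t : ℂ) • 1, ⟨?_, fun M hM' hMU => absurd (hM M hM') hMU⟩, by simp [hρ]⟩
  simp [IsHermitian, conjTranspose_smul]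

lemma feasibleValues_kraus_subset {m : ℕ}
    {A : Fin m → (a : Fin n) → Matrix (Fin (d a)) (Fin (d a)) ℂ}
    (hTP : ∑ i, (tensorOpD d (A i))ᴴ * tensorOpD d (A i) = 1) (ρ : MatD d) :
    feasibleValues d (∑ i, tensorOpD d (A i) * ρ * (tensorOpD d (A i))ᴴ) ⊆
      feasibleValues d ρ := by
  rintro _ ⟨W, hW, rfl⟩
  exact ⟨_, hW.sum_conjTranspose_tensorOpD_mul_mul hTP,
    congrArg Complex.re (trace_sum_mul_mul_conjTranspose_mul _ _ ρ W)⟩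

end Feasible

/-- `N` does not increase under trace-preserving completely positive maps
`Λ(ρ) = Σ_i K_i ρ K_i†` whose Kraus operators `K_i` are tensor products of local
operators (fully separable operator-sum representation). -/
theorem Nval_monotone_under_separable_channels {n : ℕ} (d : Fin n → ℕ) (m : ℕ)
    (A : Fin m → (a : Fin n) → Matrix (Fin (d a)) (Fin (d a)) ℂ)
    (hTP : ∑ i, (tensorOpD d (A i))ᴴ * tensorOpD d (A i) = 1)
    (ρ : MatD d) (hρ : IsState ρ) :
    Nval d (∑ i, tensorOpD d (A i) * ρ * (tensorOpD d (A i))ᴴ) ≤ Nval d ρ := by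
  simp only [Nval_eq_neg_sInf_feasibleValues]
  by_cases hM : ∃ M : Finset (Fin n), M.Nonempty ∧ M ≠ univ
  · obtain ⟨M, hM, hMU⟩ := hM
    exact neg_le_neg <| csInf_le_csInf (bddBelow_feasibleValues hM hMU ρ)
      (feasibleValues_nonempty _) (feasibleValues_kraus_subset hTP ρ)
  · push Not at hM
    have hρ' := (trace_sum_mul_mul_conjTranspose hTP ρ).trans hρ.2
    rw [feasibleValues_eq_univ hM hρ.2, feasibleValues_eq_univ hM hρ']
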